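/- Let p be a prime with p ≡ -1 (mod 12) and p ≡ -1 (mod 9) (i.e., p = 12r-1 with r = 3k). In the ring R[X]/(X^p - 1) with R = ℤ₉[u]/(u²-u), the elements 8Q(X), 8N(X), 1+Q(X), 1+N(X) are idempotents, where Q(X) = Σ_{i ∈ Q_p} X^i and N(X) = Σ_{i ∈ N_p} X^i, with Q_p the set of nonzero quadratic residues mod p and N_p the set of quadratic non-residues mod p. -/

import Mathlib

open Polynomial

noncomputable section

/-- The ring `R = ℤ₉[u]/(u² - u)`. -/
abbrev R9 : Type := Polynomial (ZMod 9) ⧸ Ideal.span {(X : Polynomial (ZMod 9)) ^ 2 - X}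

instance : CommRing R9 := Ideal.Quotient.commRing _

/-- The element `u` of `R`, the image of `X`. -/
def uu : R9 := Ideal.Quotient.mk _ (X : Polynomial (ZMod 9))

/-- The canonical embedding `ℤ₉ → R`. -/
def ι : ZMod 9 →+* R9 :=
  (Ideal.Quotient.mk _).comp (Polynomial.C : ZMod 9 →+* Polynomial (ZMod 9))
/-- The quotient ring `R[X]/(Xⁿ - 1)`. -/
abbrev Rn (n : ℕ) : Type := Polynomial R9 ⧸ Ideal.span {(X : Polynomial R9) ^ n - 1}

instance (n : ℕ) : CommRing (Rn n) := Ideal.Quotient.commRing _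

/-- The constants embedding `R → R[X]/(Xⁿ-1)`. -/
def ofR (n : ℕ) : R9 →+* Rn n :=
  (Ideal.Quotient.mk _).comp (Polynomial.C : R9 →+* Polynomial R9)

/-- The image of `X` in `R[X]/(Xⁿ-1)`. -/
def xbar (n : ℕ) : Rn n := Ideal.Quotient.mk _ (X : Polynomial R9)

/-- A word `c ∈ Rⁿ` viewed as the element `Σ cᵢ Xⁱ` of `R[X]/(Xⁿ-1)`. -/
def toPoly (n : ℕ) (c : Fin n → R9) : Rn n :=
  ∑ i, ofR n (c i) * xbar n ^ (i : ℕ)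

/-- The ring endomorphism of `R[X]/(Xⁿ-1)` induced by `X ↦ X^{n-1} = X⁻¹`. -/
def invX (n : ℕ) : Rn n →+* Rn n :=
  Ideal.Quotient.lift _ (Polynomial.eval₂RingHom (ofR n) (xbar n ^ (n - 1)))
    (by
      intro a ha
      have hx : xbar n ^ n = 1 := by
        rw [xbar, ← map_pow, ← map_one (Ideal.Quotient.mk _),
          Ideal.Quotient.mk_eq_mk_iff_sub_mem]
        exact Ideal.subset_span rfl
      have h : Ideal.span {(X : Polynomial R9) ^ n - 1} ≤
          RingHom.ker (Polynomial.eval₂RingHom (ofR n) (xbar n ^ (n - 1))) := by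
        rw [Ideal.span_le, Set.singleton_subset_iff]
        simp only [SetLike.mem_coe, RingHom.mem_ker, map_sub, map_pow, map_one,
          Polynomial.coe_eval₂RingHom, Polynomial.eval₂_X]
        rw [← pow_mul, Nat.mul_comm, pow_mul, hx, one_pow, sub_self]
      exact h ha)

/-- The Euclidean dual of the cyclic code given by an ideal of `R[X]/(Xⁿ-1)`. -/
def dualCode (n : ℕ) (J : Ideal (Rn n)) : Set (Fin n → R9) :=
  {x | ∀ c : Fin n → R9, toPoly n c ∈ J → ∑ i, x i * c i = 0}

/-- The cyclic shift. -/
def shift {α : Type*} {n : ℕ} [NeZero n] (c : Fin n → α) : Fin n → α :=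
  fun i => c (i - 1)

open scoped Classical

/-- `Q(X) = Σ_{i ∈ Q_p} Xⁱ`, the sum over nonzero quadratic residues mod `p`,
as an element of `R[X]/(X^p - 1)`. -/
def Qpoly (p : ℕ) [Fact p.Prime] : Rn p :=
  ∑ i : ZMod p, if i ≠ 0 ∧ IsSquare i then xbar p ^ i.val else 0

/-- `N(X) = Σ_{i ∈ N_p} Xⁱ`, the sum over quadratic non-residues mod `p`. -/
def Npoly (p : ℕ) [Fact p.Prime] : Rn p :=
  ∑ i : ZMod p, if i ≠ 0 ∧ ¬ IsSquare i then xbar p ^ i.val else 0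

/-! Put `S = Σ_a X^a` and let `G = Σ_a χ(a) X^a` be the quadratic Gauss sum, so that
`S + G = 2Q + 1` and `S - G = 2N + 1`. For every additive character, primitive or not,
`S² = pS`, `SG = 0` and, by the Jacobi sum `J(χ, χ) = -χ(-1)`, `G² = χ(-1)(p - S) = S - p`
since `p ≡ 3 mod 4`. Hence `(2Q + 1)² = (2N + 1)² = (p + 1)S - p = 1`, because `9 = 0` in `R`
and `9 ∣ p + 1`. As `2` is invertible mod `9`, this gives `Q² = -Q`, so that `8Q = -Q` and
`1 + Q = 1 - (-Q)` are idempotents, and likewise for `N`. -/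

open Finset

section AddChar

variable {F A : Type*} [AddGroup F] [Fintype F] [CommRing A] (ψ : AddChar F A)

lemma AddChar.sum_mul_apply (b : F) : (∑ a, ψ a) * ψ b = ∑ a, ψ a := by
  rw [sum_mul]
  exact Fintype.sum_equiv (Equiv.addRight b) _ _ fun a => (ψ.map_add_eq_mul a b).symm

lemma AddChar.sum_sq : (∑ a, ψ a) ^ 2 = Fintype.card F * ∑ a, ψ a := by
  rw [sq, mul_sum]
  simp only [ψ.sum_mul_apply, sum_const, card_univ, nsmul_eq_mul]

end AddChar

lemma AddChar.sum_mul_gaussSum {F A : Type*} [CommRing F] [Fintype F] [CommRing A]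
    (ψ : AddChar F A) (χ : MulChar F A) :
    (∑ a, ψ a) * gaussSum χ ψ = (∑ a, χ a) * ∑ a, ψ a := by
  rw [gaussSum, mul_sum]
  simp only [mul_left_comm _ (χ _), ψ.sum_mul_apply]
  rw [← sum_mul]

section Quadratic

variable {F R : Type*} [Field F] [Fintype F] [CommRing R] [IsDomain R] {χ : MulChar F R}

lemma MulChar.IsQuadratic.sum_apply_mul_apply_sub (hχ : χ ≠ 1) (hq : χ.IsQuadratic) (t : F) :
    ∑ x, χ x * χ (t - x) = χ (-1) * ((if t = 0 then (Fintype.card F : R) else 0) - 1) := by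
  have hsq : ∀ x, χ x * χ x = (1 : MulChar F R) x := fun x => by
    rw [← MulChar.mul_apply, ← sq, hq.sq_eq_one]
  rcases eq_or_ne t 0 with rfl | ht
  · have hneg : ∀ x, χ x * χ (0 - x) = χ (-1) * (χ x * χ x) := fun x => by
      rw [zero_sub, neg_eq_neg_one_mul x, map_mul]
      ring
    have hcard : ∑ x, (1 : MulChar F R) x = Fintype.card F - 1 := by
      rw [MulChar.sum_one_eq_card_units, Fintype.card_units,
        Nat.cast_sub Fintype.card_pos, Nat.cast_one]
    simp only [hneg, hsq, ← mul_sum, hcard, if_true]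
  · calc ∑ x, χ x * χ (t - x) = ∑ y, χ (t * y) * χ (t - t * y) :=
          (Equiv.sum_comp (Equiv.mulLeft₀ t ht) _).symm
      _ = ∑ y, (χ t * χ t) * (χ y * χ⁻¹ (1 - y)) := by
          simp only [hq.inv, ← mul_one_sub t, map_mul]
          exact sum_congr rfl fun _ _ => by ring
      _ = χ (-1) * ((if t = 0 then (Fintype.card F : R) else 0) - 1) := by
          rw [← mul_sum, ← jacobiSum, jacobiSum_nontrivial_inv hχ, hsq,
            MulChar.one_apply (Ne.isUnit ht), if_neg ht]
          ring

variable {A : Type*} [CommRing A]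

lemma gaussSum_ringHomComp_sq (hχ : χ ≠ 1) (hq : χ.IsQuadratic) (f : R →+* A)
    (ψ : AddChar F A) :
    gaussSum (χ.ringHomComp f) ψ ^ 2 = f (χ (-1)) * (Fintype.card F - ∑ a, ψ a) := by
  calc gaussSum (χ.ringHomComp f) ψ ^ 2 = ∑ t, f (∑ x, χ x * χ (t - x)) * ψ t := by
        rw [sq, gaussSum_mul]
        simp only [MulChar.ringHomComp_apply, map_sum, map_mul, sum_mul]
    _ = ∑ t, f (χ (-1)) * ((if t = 0 then (Fintype.card F : A) else 0) - 1) * ψ t := by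
        simp only [hq.sum_apply_mul_apply_sub hχ, map_mul, map_sub, map_one, apply_ite f,
          map_natCast, map_zero]
    _ = f (χ (-1)) * (Fintype.card F - ∑ a, ψ a) := by
        simp only [mul_assoc, ← mul_sum, sub_mul, one_mul, sum_sub_distrib, ite_mul, zero_mul,
          sum_ite_eq', mem_univ, if_true, ψ.map_zero_eq_one, mul_one]

end Quadratic

section QuadraticChar

variable {F A : Type*} [Field F] [Fintype F] [DecidableEq F] [CommRing A] (ψ : AddChar F A)

lemma sum_add_gaussSum_quadraticChar [DecidablePred (IsSquare : F → Prop)] :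
    ∑ a, ψ a + gaussSum ((quadraticChar F).ringHomComp (Int.castRingHom A)) ψ
      = 2 * ∑ a, (if a ≠ 0 ∧ IsSquare a then ψ a else 0) + 1 := by
  have hterm : ∀ a, ψ a + ((quadraticChar F a : ℤ) : A) * ψ a
      = 2 * (if a ≠ 0 ∧ IsSquare a then ψ a else 0) + if a = 0 then 1 else 0 := fun a => by
    rw [quadraticChar_apply, quadraticCharFun]
    by_cases ha : a = 0
    · simp [ha]
    · by_cases hsq : IsSquare a <;> simp [ha, hsq, two_mul]
  simp only [gaussSum, MulChar.ringHomComp_apply, eq_intCast, ← sum_add_distrib, hterm]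
  rw [sum_add_distrib, ← mul_sum, sum_ite_eq', if_pos (mem_univ _)]

lemma sum_sub_gaussSum_quadraticChar [DecidablePred (IsSquare : F → Prop)] :
    ∑ a, ψ a - gaussSum ((quadraticChar F).ringHomComp (Int.castRingHom A)) ψ
      = 2 * ∑ a, (if a ≠ 0 ∧ ¬IsSquare a then ψ a else 0) + 1 := by
  have hterm : ∀ a, ψ a - ((quadraticChar F a : ℤ) : A) * ψ a
      = 2 * (if a ≠ 0 ∧ ¬IsSquare a then ψ a else 0) + if a = 0 then 1 else 0 := fun a => by
    rw [quadraticChar_apply, quadraticCharFun]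
    by_cases ha : a = 0
    · simp [ha]
    · by_cases hsq : IsSquare a <;> simp [ha, hsq, two_mul]
  simp only [gaussSum, MulChar.ringHomComp_apply, eq_intCast, ← sum_sub_distrib, hterm]
  rw [sum_add_distrib, ← mul_sum, sum_ite_eq', if_pos (mem_univ _)]

lemma sum_mul_gaussSum_quadraticChar (hF : ringChar F ≠ 2) :
    (∑ a, ψ a) * gaussSum ((quadraticChar F).ringHomComp (Int.castRingHom A)) ψ = 0 := by
  rw [ψ.sum_mul_gaussSum]
  simp only [MulChar.ringHomComp_apply, ← map_sum, quadraticChar_sum_zero hF, map_zero, zero_mul]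

lemma gaussSum_quadraticChar_sq (hF : ringChar F ≠ 2) (hneg : quadraticChar F (-1) = -1) :
    gaussSum ((quadraticChar F).ringHomComp (Int.castRingHom A)) ψ ^ 2
      = ∑ a, ψ a - Fintype.card F := by
  rw [gaussSum_ringHomComp_sq (quadraticChar_ne_one hF) (quadraticChar_isQuadratic F), hneg,
    map_neg, map_one]
  ring

lemma sq_two_mul_sum_isSquare_add_one [DecidablePred (IsSquare : F → Prop)]
    (hF : ringChar F ≠ 2) (hneg : quadraticChar F (-1) = -1) :
    (2 * ∑ a, (if a ≠ 0 ∧ IsSquare a then ψ a else 0) + 1) ^ 2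
      = (Fintype.card F + 1) * ∑ a, ψ a - Fintype.card F := by
  rw [← sum_add_gaussSum_quadraticChar]
  linear_combination ψ.sum_sq + 2 * sum_mul_gaussSum_quadraticChar ψ hF +
    gaussSum_quadraticChar_sq ψ hF hneg

lemma sq_two_mul_sum_not_isSquare_add_one [DecidablePred (IsSquare : F → Prop)]
    (hF : ringChar F ≠ 2) (hneg : quadraticChar F (-1) = -1) :
    (2 * ∑ a, (if a ≠ 0 ∧ ¬IsSquare a then ψ a else 0) + 1) ^ 2
      = (Fintype.card F + 1) * ∑ a, ψ a - Fintype.card F := by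
  rw [← sum_sub_gaussSum_quadraticChar]
  linear_combination ψ.sum_sq - 2 * sum_mul_gaussSum_quadraticChar ψ hF +
    gaussSum_quadraticChar_sq ψ hF hneg

end QuadraticChar

lemma IsIdempotentElem.neg_of_sq_two_mul_add_one_eq_one {A : Type*} [CommRing A] {e : A}
    (h2 : IsUnit (2 : A)) (h : (2 * e + 1) ^ 2 = 1) : IsIdempotentElem (-e) := by
  have h4 : 2 * 2 * (e * e + e) = 0 := by linear_combination h
  have he : e * e + e = 0 := (h2.mul h2).mul_right_eq_zero.mp h4
  show -e * -e = -e
  linear_combination he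

lemma xbar_pow_self (n : ℕ) : xbar n ^ n = 1 := by
  rw [xbar, ← map_pow, ← map_one (Ideal.Quotient.mk _), Ideal.Quotient.mk_eq_mk_iff_sub_mem]
  exact Ideal.subset_span rfl

lemma Rn.nine_eq_zero (n : ℕ) : (9 : Rn n) = 0 := by
  have h := map_ofNat ((ofR n).comp ι) 9
  rwa [show (9 : ZMod 9) = 0 from rfl, map_zero, eq_comm] at h

lemma Rn.natCast_eq_zero_of_nine_dvd {n m : ℕ} (h : 9 ∣ m) : (m : Rn n) = 0 := by
  obtain ⟨k, rfl⟩ := h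
  rw [Nat.cast_mul, Nat.cast_ofNat, Rn.nine_eq_zero, zero_mul]

lemma Rn.isUnit_two (n : ℕ) : IsUnit (2 : Rn n) :=
  IsUnit.of_mul_eq_one 5 (by linear_combination Rn.nine_eq_zero n)

lemma Qpoly_eq_sum_zmodChar (p : ℕ) [Fact p.Prime] :
    Qpoly p = ∑ a, if a ≠ 0 ∧ IsSquare a then AddChar.zmodChar p (xbar_pow_self p) a else 0 :=
  rfl

lemma Npoly_eq_sum_zmodChar (p : ℕ) [Fact p.Prime] :
    Npoly p = ∑ a, if a ≠ 0 ∧ ¬IsSquare a then AddChar.zmodChar p (xbar_pow_self p) a else 0 :=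
  rfl

theorem stmt16 (p : ℕ) [Fact p.Prime] (hp12 : p % 12 = 11) (hp9 : p % 9 = 8) :
    IsIdempotentElem (8 * Qpoly p) ∧ IsIdempotentElem (8 * Npoly p) ∧
    IsIdempotentElem (1 + Qpoly p) ∧ IsIdempotentElem (1 + Npoly p) := by
  have hchar : ringChar (ZMod p) ≠ 2 := by rw [ZMod.ringChar_zmod_n]; omega
  have hneg : quadraticChar (ZMod p) (-1) = -1 :=
    quadraticChar_neg_one_iff_not_isSquare.mpr (by rw [ZMod.exists_sq_eq_neg_one_iff]; omega)
  have hcard : (Fintype.card (ZMod p) : Rn p) + 1 = 0 := by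
    rw [ZMod.card]; exact_mod_cast Rn.natCast_eq_zero_of_nine_dvd (by omega)
  let ψ := AddChar.zmodChar p (xbar_pow_self p)
  have hQ : IsIdempotentElem (-Qpoly p) :=
    .neg_of_sq_two_mul_add_one_eq_one (Rn.isUnit_two p) <| by
      rw [Qpoly_eq_sum_zmodChar]
      linear_combination sq_two_mul_sum_isSquare_add_one ψ hchar hneg + (∑ a, ψ a - 1) * hcard
  have hN : IsIdempotentElem (-Npoly p) :=
    .neg_of_sq_two_mul_add_one_eq_one (Rn.isUnit_two p) <| by
      rw [Npoly_eq_sum_zmodChar]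
      linear_combination sq_two_mul_sum_not_isSquare_add_one ψ hchar hneg + (∑ a, ψ a - 1) * hcard
  have h8 : ∀ e : Rn p, 8 * e = -e := fun e => by linear_combination e * Rn.nine_eq_zero p
  refine ⟨h8 _ ▸ hQ, h8 _ ▸ hN, ?_, ?_⟩
  · simpa using hQ.one_sub
  · simpa using hN.one_sub
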